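/- arXiv:1806.07357 — 2 statements merged into one kernel-verified Lean document; each statement's English description precedes it below -/
import Mathlib

section
/- In the compatible partial-comparison setup, the distribution of the first record value satisfies P(X_{L(1)} < x) = Σ_{j≥1} P(L(1) = n_j) F(x)^{n_j} for all x, where L(1) = inf{t ≥ 1 : A_{n_t} occurs} indexes the first record along the subsequence; here the index is compared through the counting convention c(n_j) = n_j in the exponent when C(n_j) ∪ {n_j} has cardinality n_j. -/
/-!
On the event `B j` that the first record along the subsequence occurs at `nseq j`, the variable
`X (nseq j)` is the largest of the `nseq j` variables indexed by `S = C (nseq j) ∪ {nseq j}`, so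
`{X (nseq j) < x}` may be replaced by the box `{X i < x for all i ∈ S}`. By compatibility every
earlier comparison set lies in `S`, so `B j` only depends on the relative order of `(X i)_{i ∈ S}`.
For i.i.d. variables without atoms such an order event is independent of every box: ties are
null, and by exchangeability each of the `|S|!` strict orderings of the coordinates carries the
same share of the box. Hence `μ (B j ∩ {X (nseq j) < x}) = μ (B j) * F x ^ nseq j`, and the
events `B j` are disjoint.
-/

open MeasureTheory ProbabilityTheory Set Filter Topology
open scoped ENNReal

def IsOrderDeterminedOn {ι α : Type*} [LT α] (s : Set ι) (P : Set (ι → α)) : Prop :=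
  ∀ y z : ι → α, (∀ a ∈ s, ∀ b ∈ s, y a < y b ↔ z a < z b) → (y ∈ P ↔ z ∈ P)

lemma isOrderDeterminedOn_univ {ι α : Type*} [LT α] (s : Set ι) :
    IsOrderDeterminedOn s (univ : Set (ι → α)) :=
  fun _ _ _ => Iff.rfl

section OrderPattern

variable {α : Type*} [LinearOrder α] {ι : Type*} [Fintype ι]

def sortedBy (σ : Fin (Fintype.card ι) ≃ ι) : Set (ι → α) := {y | StrictMono (y ∘ σ)}

lemma injective_of_mem_sortedBy {σ : Fin (Fintype.card ι) ≃ ι} {y : ι → α}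
    (hy : y ∈ sortedBy σ) : Function.Injective y := by
  simpa [Function.comp_assoc] using (hy : StrictMono (y ∘ σ)).injective.comp σ.symm.injective

lemma exists_mem_sortedBy_of_injective {y : ι → α} (hy : Function.Injective y) :
    ∃ σ, y ∈ sortedBy σ := by
  let e := (Fintype.equivFin ι).symm
  have hmono : Monotone ((y ∘ e) ∘ Tuple.sort (y ∘ e)) := Tuple.monotone_sort _
  exact ⟨(Tuple.sort (y ∘ e)).trans e,
    hmono.strictMono_of_injective ((hy.comp e.injective).comp (Equiv.injective _))⟩

lemma pairwise_disjoint_sortedBy :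
    Pairwise (Function.onFun Disjoint (sortedBy : (Fin (Fintype.card ι) ≃ ι) → Set (ι → α))) := by
  intro σ τ hne
  refine Set.disjoint_left.mpr fun y hσ hτ => hne ?_
  have hrange (π : Fin (Fintype.card ι) ≃ ι) : range (y ∘ π) = range y :=
    π.surjective.range_comp y
  have heq : y ∘ σ = y ∘ τ := (StrictMono.range_inj hσ hτ).mp ((hrange σ).trans (hrange τ).symm)
  exact Equiv.ext fun i => injective_of_mem_sortedBy hσ (congrFun heq i)

lemma IsOrderDeterminedOn.sortedBy_subset {P : Set (ι → α)} (hP : IsOrderDeterminedOn univ P)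
    {σ : Fin (Fintype.card ι) ≃ ι} {y : ι → α} (hσ : y ∈ sortedBy σ) (hy : y ∈ P) :
    sortedBy σ ⊆ P := by
  intro z hz
  refine (hP y z fun a _ b _ => ?_).mp hy
  rw [← σ.apply_symm_apply a, ← σ.apply_symm_apply b]
  exact (StrictMono.lt_iff_lt hσ).trans (StrictMono.lt_iff_lt hz).symm

variable [MeasurableSpace α] (ν : Measure α) [IsProbabilityMeasure ν]

lemma measure_sortedBy_inter_pi_eq (σ τ : Fin (Fintype.card ι) ≃ ι) (U : Set α) :
    Measure.pi (fun _ : ι => ν) (sortedBy σ ∩ univ.pi fun _ => U)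
      = Measure.pi (fun _ : ι => ν) (sortedBy τ ∩ univ.pi fun _ => U) := by
  set e := τ.symm.trans σ
  have hpres := measurePreserving_arrowCongr' (fun _ : ι => ν) (fun _ : ι => ν) e
    (MeasurableEquiv.refl α) fun _ => MeasurePreserving.id ν
  have happly : ⇑(MeasurableEquiv.arrowCongr' e (MeasurableEquiv.refl α)) =
      fun y i => y (e.symm i) := rfl
  rw [← hpres.measure_preimage_equiv, happly]
  congr 1
  ext y
  simp only [sortedBy, mem_inter_iff, mem_preimage, mem_ofPred_eq, Set.mem_pi, mem_univ,
    forall_const]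
  exact and_congr (by simp [e, Function.comp_def]) (e.forall_congr_left (p := (· ∈ U) ∘ y)).symm

variable [TopologicalSpace α] [OrderClosedTopology α] [SecondCountableTopology α]
  [OpensMeasurableSpace α]

lemma measurableSet_sortedBy (σ : Fin (Fintype.card ι) ≃ ι) :
    MeasurableSet (sortedBy σ : Set (ι → α)) := by
  simp only [sortedBy, StrictMono, Function.comp_apply, ofPred_forall]
  exact .iInter fun i => .iInter fun j => .iInter fun _ =>
    measurableSet_lt (measurable_pi_apply _) (measurable_pi_apply _)

variable [NullSingletonClass ν]

lemma ae_apply_ne_apply {a b : ι} (hab : a ≠ b) :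
    ∀ᵐ y ∂(Measure.pi fun _ : ι => ν), y a ≠ y b := by
  have hind := (iIndepFun_pi (μ := fun _ : ι => ν) (X := fun _ => id)
    fun _ => aemeasurable_id).indepFun hab
  have hlaw : (Measure.pi fun _ : ι => ν).map (fun y => (y a, y b)) = ν.prod ν := by
    rw [(indepFun_iff_map_prod_eq_prod_map_map (measurable_pi_apply a).aemeasurable
      (measurable_pi_apply b).aemeasurable).mp hind, (measurePreserving_eval _ a).map_eq,
      (measurePreserving_eval _ b).map_eq]
  have hdiag : ∀ᵐ p ∂ν.prod ν, p.1 ≠ p.2 := by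
    refine (Measure.ae_prod_iff_ae_ae (p := fun p : α × α => p.1 ≠ p.2)
      measurableSet_diagonal.compl).mpr ?_
    exact ae_of_all _ fun x => (Measure.ae_ne ν x).mono fun y hy => Ne.symm hy
  rw [← hlaw] at hdiag
  exact ae_of_ae_map ((measurable_pi_apply a).prodMk (measurable_pi_apply b)).aemeasurable hdiag

lemma ae_injective :
    ∀ᵐ y ∂(Measure.pi fun _ : ι => ν), Function.Injective y := by
  have h : ∀ᵐ y ∂(Measure.pi fun _ : ι => ν), ∀ a b, a ≠ b → y a ≠ y b := by
    simp only [ae_all_iff]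
    exact fun a b hab => ae_apply_ne_apply ν hab
  exact h.mono fun y hy a b hyab => by_contra fun hab => hy a b hab hyab

open Classical in
lemma IsOrderDeterminedOn.measure_inter_pi_eq_card_mul {P : Set (ι → α)}
    (hP : IsOrderDeterminedOn univ P) (σ₀ : Fin (Fintype.card ι) ≃ ι) {U : Set α}
    (hU : MeasurableSet U) :
    Measure.pi (fun _ : ι => ν) (P ∩ univ.pi fun _ => U)
      = (Finset.univ.filter fun σ => sortedBy σ ⊆ P).card
        * Measure.pi (fun _ : ι => ν) (sortedBy σ₀ ∩ univ.pi fun _ => U) := by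
  set T := Finset.univ.filter fun σ => sortedBy σ ⊆ P
  have hcover : (P ∩ univ.pi fun _ => U : Set (ι → α))
      =ᵐ[Measure.pi fun _ : ι => ν] ⋃ σ ∈ T, sortedBy σ ∩ univ.pi fun _ => U := by
    filter_upwards [ae_injective ν] with y hy
    change (y ∈ P ∩ univ.pi fun _ => U) = (y ∈ ⋃ σ ∈ T, sortedBy σ ∩ univ.pi fun _ => U)
    simp only [mem_iUnion, mem_inter_iff, exists_prop, T, Finset.mem_filter, Finset.mem_univ,
      true_and, eq_iff_iff]
    constructor
    · rintro ⟨hyP, hyU⟩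
      obtain ⟨σ, hσ⟩ := exists_mem_sortedBy_of_injective hy
      exact ⟨σ, hP.sortedBy_subset hσ hyP, hσ, hyU⟩
    · rintro ⟨σ, hσP, hσ, hyU⟩
      exact ⟨hσP hσ, hyU⟩
  rw [measure_congr hcover, measure_biUnion_finset
    (fun σ _ τ _ hne => (pairwise_disjoint_sortedBy hne).mono inter_subset_left inter_subset_left)
    (fun σ _ => (measurableSet_sortedBy σ).inter (.univ_pi fun _ => hU)),
    Finset.sum_congr rfl fun σ _ => measure_sortedBy_inter_pi_eq ν σ σ₀ U,
    Finset.sum_const, nsmul_eq_mul]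

theorem IsOrderDeterminedOn.measure_inter_pi_eq_mul {P : Set (ι → α)}
    (hP : IsOrderDeterminedOn univ P) {U : Set α} (hU : MeasurableSet U) :
    Measure.pi (fun _ : ι => ν) (P ∩ univ.pi fun _ => U)
      = Measure.pi (fun _ : ι => ν) P * ν U ^ Fintype.card ι := by
  classical
  obtain ⟨σ₀⟩ : Nonempty (Fin (Fintype.card ι) ≃ ι) := ⟨(Fintype.equivFin ι).symm⟩
  have hP_box := hP.measure_inter_pi_eq_card_mul ν σ₀ hU
  have hP_univ := hP.measure_inter_pi_eq_card_mul ν σ₀ MeasurableSet.univ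
  -- the case `P = univ`: the orderings of the coordinates share every box equally
  have hbox {V : Set α} (hV : MeasurableSet V) :=
    (isOrderDeterminedOn_univ (α := α) (univ : Set ι)).measure_inter_pi_eq_card_mul ν σ₀ hV
  have hunit := hbox MeasurableSet.univ
  simp only [pi_univ, inter_univ, univ_inter, subset_univ, Finset.filter_true,
    Finset.card_univ, Measure.pi_pi, Finset.prod_const, measure_univ]
    at hP_univ hbox hunit
  set K : ℝ≥0∞ := ((Fintype.card (Fin (Fintype.card ι) ≃ ι) : ℕ) : ℝ≥0∞)
  set N : ℝ≥0∞ := ((Finset.univ.filter fun σ => sortedBy σ ⊆ P).card : ℝ≥0∞)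
  set ρ := Measure.pi fun _ : ι => ν
  have hK : K ≠ 0 := by
    have : Nonempty (Fin (Fintype.card ι) ≃ ι) := ⟨σ₀⟩
    simp [K, Fintype.card_ne_zero]
  refine (ENNReal.mul_right_inj hK (ENNReal.natCast_ne_top _)).mp ?_
  rw [hP_box, hP_univ, hbox hU]
  calc K * (N * ρ (sortedBy σ₀ ∩ univ.pi fun _ => U))
      = K * (N * ρ (sortedBy σ₀ ∩ univ.pi fun _ => U)) * (K * ρ (sortedBy σ₀)) := by
        rw [← hunit, mul_one]
    _ = K * (N * ρ (sortedBy σ₀) * (K * ρ (sortedBy σ₀ ∩ univ.pi fun _ => U))) := by ring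

end OrderPattern

section Transfer

variable {α : Type*} [LinearOrder α] [TopologicalSpace α] [OrderClosedTopology α]
  [SecondCountableTopology α] [MeasurableSpace α] [OpensMeasurableSpace α]

theorem IsOrderDeterminedOn.measure_preimage_inter_eq_mul {Ω ι : Type*} [MeasurableSpace Ω]
    {μ : Measure Ω} {X : ι → Ω → α} (hX : ∀ i, Measurable (X i)) (hindep : iIndepFun X μ)
    {ν : Measure α} [IsProbabilityMeasure ν] [NullSingletonClass ν] (hlaw : ∀ i, μ.map (X i) = ν)
    {S : Finset ι} {Q : Set (ι → α)} (hQ : IsOrderDeterminedOn ↑S Q) (hQm : MeasurableSet Q)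
    {U : Set α} (hU : MeasurableSet U) :
    μ ((fun ω i => X i ω) ⁻¹' Q ∩ {ω | ∀ i ∈ S, X i ω ∈ U})
      = μ ((fun ω i => X i ω) ⁻¹' Q) * ν U ^ S.card := by
  classical
  obtain ⟨x₀⟩ := nonempty_of_isProbabilityMeasure ν
  let Y : Ω → S → α := fun ω i => X i ω
  have hY : Measurable Y := measurable_pi_lambda _ fun i => hX i
  let extend : (S → α) → ι → α := fun y i => if h : i ∈ S then y ⟨i, h⟩ else x₀
  have hextend : Measurable extend := by
    refine measurable_pi_lambda _ fun i => ?_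
    by_cases h : i ∈ S
    · simpa [extend, h] using measurable_pi_apply (⟨i, h⟩ : S)
    · simp [extend, h]
  have hQ' : IsOrderDeterminedOn univ (extend ⁻¹' Q) := fun y z hyz =>
    hQ _ _ fun a ha b hb => by
      simpa [extend, Finset.mem_coe.mp ha, Finset.mem_coe.mp hb] using
        hyz ⟨a, ha⟩ trivial ⟨b, hb⟩ trivial
  have hpre_Q : (fun ω i => X i ω) ⁻¹' Q = Y ⁻¹' (extend ⁻¹' Q) := by
    ext ω
    exact hQ _ _ fun a ha b hb => by
      simp [Y, extend, Finset.mem_coe.mp ha, Finset.mem_coe.mp hb]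
  have hpre_box : {ω | ∀ i ∈ S, X i ω ∈ U} = Y ⁻¹' (univ.pi fun _ => U) := by
    ext ω
    simp [Y]
  have hlawY : μ.map Y = Measure.pi fun _ : S => ν := by
    rw [(hindep.precomp Subtype.val_injective).map_fun_eq_pi_map
      fun i : S => (hX i).aemeasurable]
    simp only [hlaw]
  rw [hpre_Q, hpre_box, ← preimage_inter,
    ← Measure.map_apply hY ((hextend hQm).inter (.univ_pi fun _ => hU)),
    ← Measure.map_apply hY (hextend hQm), hlawY, hQ'.measure_inter_pi_eq_mul ν hU,
    Fintype.card_coe]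

end Transfer

section Records

variable {ι α : Type*}

def recordSet [LT α] (C : ι → Finset ι) (n : ι) : Set (ι → α) := {y | ∀ l ∈ C n, y l < y n}

def firstRecordSet [LT α] (C : ι → Finset ι) (nseq : ℕ → ι) (j : ℕ) : Set (ι → α) :=
  (⋂ t ∈ Finset.range j, (recordSet C (nseq t))ᶜ) ∩ recordSet C (nseq j)

lemma pairwise_disjoint_firstRecordSet [LT α] (C : ι → Finset ι) (nseq : ℕ → ι) :
    Pairwise (Function.onFun Disjoint (firstRecordSet (α := α) C nseq)) := by
  have key {i j : ℕ} (hij : i < j) : Disjoint (firstRecordSet (α := α) C nseq i)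
      (firstRecordSet C nseq j) :=
    Set.disjoint_left.mpr fun y hi hj =>
      mem_iInter₂.mp hj.1 i (Finset.mem_range.mpr hij) hi.2
  intro i j hne
  rcases hne.lt_or_gt with hij | hji
  exacts [key hij, (key hji).symm]

lemma isOrderDeterminedOn_firstRecordSet [LT α] {C : ι → Finset ι} {nseq : ℕ → ι} {j : ℕ}
    {S : Set ι} (hS : ∀ t ≤ j, nseq t ∈ S ∧ ↑(C (nseq t)) ⊆ S) :
    IsOrderDeterminedOn S (firstRecordSet (α := α) C nseq j) := by
  intro y z hyz
  have hrec {t : ℕ} (ht : t ≤ j) : y ∈ recordSet C (nseq t) ↔ z ∈ recordSet C (nseq t) :=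
    forall₂_congr fun l hl => hyz l ((hS t ht).2 hl) _ (hS t ht).1
  simp only [firstRecordSet, mem_inter_iff, mem_iInter, mem_compl_iff, Finset.mem_range]
  exact and_congr (forall₂_congr fun t ht => not_congr (hrec ht.le)) (hrec le_rfl)

lemma lt_iff_forall_lt_of_mem_recordSet [Preorder α] [DecidableEq ι] {C : ι → Finset ι} {n : ι}
    {y : ι → α} (hy : y ∈ recordSet C n) (x : α) :
    y n < x ↔ ∀ l ∈ insert n (C n), y l < x := by
  simp only [Finset.mem_insert, forall_eq_or_imp]
  exact ⟨fun h => ⟨h, fun l hl => (hy l hl).trans h⟩, And.left⟩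

lemma insert_comparisonSet_subset_of_le [DecidableEq ι] {C : ι → Finset ι} {nseq : ℕ → ι}
    (ha1 : ∀ t, C (nseq t) ⊆ C (nseq (t + 1)))
    (ha2 : ∀ t, nseq t ∈ C (nseq (t + 1))) {t j : ℕ} (htj : t ≤ j) :
    insert (nseq t) (C (nseq t)) ⊆ insert (nseq j) (C (nseq j)) := by
  have hmono : Monotone fun t => C (nseq t) := monotone_nat_of_le_succ ha1
  rcases htj.eq_or_lt with rfl | hlt
  · rfl
  · exact (Finset.insert_subset (hmono hlt (ha2 t)) (hmono hlt.le)).trans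
      (Finset.subset_insert _ _)

variable [LinearOrder α] [TopologicalSpace α] [OrderClosedTopology α]
  [SecondCountableTopology α] [MeasurableSpace α] [OpensMeasurableSpace α]

lemma measurableSet_recordSet (C : ι → Finset ι) (n : ι) :
    MeasurableSet (recordSet (α := α) C n) := by
  simp only [recordSet, ofPred_forall]
  exact .biInter (C n).countable_toSet fun l _ =>
    measurableSet_lt (measurable_pi_apply l) (measurable_pi_apply n)

lemma measurableSet_firstRecordSet (C : ι → Finset ι) (nseq : ℕ → ι) (j : ℕ) :
    MeasurableSet (firstRecordSet (α := α) C nseq j) :=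
  (MeasurableSet.biInter (Finset.range j).countable_toSet fun _ _ =>
    (measurableSet_recordSet C _).compl).inter (measurableSet_recordSet C _)

theorem measure_firstRecordSet_inter_lt {Ω : Type*} [MeasurableSpace Ω] {μ : Measure Ω}
    [DecidableEq ι] {X : ι → Ω → α} (hX : ∀ i, Measurable (X i)) (hindep : iIndepFun X μ)
    {ν : Measure α} [IsProbabilityMeasure ν] [NullSingletonClass ν] (hlaw : ∀ i, μ.map (X i) = ν)
    {C : ι → Finset ι} {nseq : ℕ → ι} (ha1 : ∀ t, C (nseq t) ⊆ C (nseq (t + 1)))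
    (ha2 : ∀ t, nseq t ∈ C (nseq (t + 1))) (j : ℕ) (x : α) :
    μ ((fun ω i => X i ω) ⁻¹' firstRecordSet C nseq j ∩ {ω | X (nseq j) ω < x})
      = μ ((fun ω i => X i ω) ⁻¹' firstRecordSet C nseq j)
        * ν (Iio x) ^ (insert (nseq j) (C (nseq j))).card := by
  set S := insert (nseq j) (C (nseq j))
  have hS (t : ℕ) (ht : t ≤ j) : nseq t ∈ (S : Set ι) ∧ ↑(C (nseq t)) ⊆ (S : Set ι) := by
    exact_mod_cast Finset.insert_subset_iff.mp (insert_comparisonSet_subset_of_le ha1 ha2 ht)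
  have hbox : (fun ω i => X i ω) ⁻¹' firstRecordSet C nseq j ∩ {ω | X (nseq j) ω < x}
      = (fun ω i => X i ω) ⁻¹' firstRecordSet C nseq j ∩ {ω | ∀ i ∈ S, X i ω ∈ Iio x} := by
    ext ω
    exact and_congr_right fun hω => lt_iff_forall_lt_of_mem_recordSet hω.2 x
  rw [hbox]
  exact (isOrderDeterminedOn_firstRecordSet hS).measure_preimage_inter_eq_mul hX hindep hlaw
    (measurableSet_firstRecordSet C nseq j) measurableSet_Iio

end Records

theorem MeasureTheory.Measure.ext_of_Iio {α : Type*} [TopologicalSpace α] [LinearOrder α]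
    [OrderTopology α] [SecondCountableTopology α] [MeasurableSpace α] [BorelSpace α]
    {ν₁ ν₂ : Measure α} [IsProbabilityMeasure ν₁] [IsProbabilityMeasure ν₂]
    (h : ∀ t, ν₁ (Iio t) = ν₂ (Iio t)) : ν₁ = ν₂ :=
  ext_of_generate_finite _ (BorelSpace.measurable_eq.trans (borel_eq_generateFrom_Iio α))
    isPiSystem_Iio (by rintro _ ⟨t, rfl⟩; exact h t) (by simp)

lemma nullSingletonClass_of_measure_Iio {ν : Measure ℝ} [IsFiniteMeasure ν] {F : ℝ → ℝ}
    (hF : Continuous F) (h : ∀ t, ν (Iio t) = ENNReal.ofReal (F t)) : NullSingletonClass ν := by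
  refine ⟨fun a => ?_⟩
  have hIic : ν (Iic a) ≤ ENNReal.ofReal (F a) :=
    ge_of_tendsto ((ENNReal.continuous_ofReal.comp hF).continuousAt.tendsto.mono_left
        nhdsWithin_le_nhds : Tendsto _ (𝓝[>] a) _)
      (eventually_nhdsWithin_of_forall fun b (hb : a < b) =>
        (measure_mono (Iic_subset_Iio.mpr hb)).trans_eq (h b))
  rw [← Iio_union_right, measure_union (by simp) (measurableSet_singleton a), h] at hIic
  exact nonpos_iff_eq_zero.mp
    ((ENNReal.add_le_add_iff_left ENNReal.ofReal_ne_top).mp (hIic.trans_eq (add_zero _).symm))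

theorem first_record_value_distribution_general
    {Ω : Type*} [MeasurableSpace Ω] (μ : Measure Ω) [IsProbabilityMeasure μ]
    (X : ℕ → Ω → ℝ) (hmeas : ∀ i, Measurable (X i))
    (hindep : iIndepFun X μ)
    (F : ℝ → ℝ) (hF : Continuous F) (hF0 : ∀ x, 0 ≤ F x)
    (hcdf : ∀ i x, μ {ω | X i ω < x} = ENNReal.ofReal (F x))
    (nseq : ℕ → ℕ)
    (C : ℕ → Finset ℕ)
    (hsub : ∀ t, C (nseq t) ⊆ Finset.Icc 1 (nseq t - 1))
    (ha1 : ∀ t, C (nseq t) ⊂ C (nseq (t + 1)))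
    (ha2 : ∀ t, nseq t ∈ C (nseq (t + 1)))
    (hc : ∀ t, (C (nseq t)).card + 1 = nseq t)
    (A : ℕ → Set Ω)
    (hA : ∀ n, A n = {ω | ∀ l ∈ C n, X l ω < X n ω})
    (B : ℕ → Set Ω)
    (hB : ∀ j, B j = (⋂ t ∈ Finset.range j, (A (nseq t))ᶜ) ∩ A (nseq j))
    (x : ℝ) :
    μ (⋃ j, B j ∩ {ω | X (nseq j) ω < x})
      = ∑' j, μ (B j) * ENNReal.ofReal (F x ^ (nseq j)) := by
  have hprob (i : ℕ) : IsProbabilityMeasure (μ.map (X i)) :=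
    Measure.isProbabilityMeasure_map (hmeas i).aemeasurable
  have hIio (i : ℕ) (t : ℝ) : μ.map (X i) (Iio t) = ENNReal.ofReal (F t) :=
    (Measure.map_apply (hmeas i) measurableSet_Iio).trans (hcdf i t)
  have hlaw (i : ℕ) : μ.map (X i) = μ.map (X 0) :=
    Measure.ext_of_Iio fun t => by rw [hIio, hIio]
  have : NullSingletonClass (μ.map (X 0)) := nullSingletonClass_of_measure_Iio hF (hIio 0)
  have hB_eq (j : ℕ) : B j = (fun ω i => X i ω) ⁻¹' firstRecordSet C nseq j := by
    ext ω
    simp [hB, hA, firstRecordSet, recordSet]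
  have hcard (j : ℕ) : (insert (nseq j) (C (nseq j))).card = nseq j := by
    rw [Finset.card_insert_of_notMem fun h => by
      have := Finset.mem_Icc.mp (hsub j h); omega, hc]
  have hterm (j : ℕ) :
      μ (B j ∩ {ω | X (nseq j) ω < x}) = μ (B j) * ENNReal.ofReal (F x ^ nseq j) := by
    rw [hB_eq, measure_firstRecordSet_inter_lt hmeas hindep hlaw (fun t => (ha1 t).subset) ha2,
      hcard, hIio, ENNReal.ofReal_pow (hF0 x)]
  rw [measure_iUnion (fun i j hij => ?_) fun j => ?_]
  · exact tsum_congr hterm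
  · simp only [hB_eq]
    exact ((pairwise_disjoint_firstRecordSet C nseq hij).preimage _).mono
      inter_subset_left inter_subset_left
  · rw [hB_eq]
    exact ((measurableSet_firstRecordSet C nseq j).preimage (measurable_pi_lambda _ hmeas)).inter
      (measurableSet_lt (hmeas _) measurable_const)

/-- Distribution of the first record value along a compatible subsequence in which
`|C (nseq t)| + 1 = nseq t` (e.g. total comparison). With
`B j = {L(1) = nseq j}` the event that the first record along the subsequence
occurs at index `nseq j`,
`P(X_{L(1)} < x) = ∑_j P(L(1) = nseq j) · F(x) ^ (nseq j)`. -/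
theorem first_record_value_distribution
    {Ω : Type*} [MeasurableSpace Ω] (μ : Measure Ω) [IsProbabilityMeasure μ]
    (X : ℕ → Ω → ℝ) (hmeas : ∀ i, Measurable (X i))
    (hindep : iIndepFun X μ)
    (F : ℝ → ℝ) (hF : Continuous F) (hF0 : ∀ x, 0 ≤ F x)
    (hcdf : ∀ i x, μ {ω | X i ω < x} = ENNReal.ofReal (F x))
    (nseq : ℕ → ℕ) (hmono : StrictMono nseq) (hone : ∀ t, 1 ≤ nseq t)
    (C : ℕ → Finset ℕ)
    (hsub : ∀ t, C (nseq t) ⊆ Finset.Icc 1 (nseq t - 1))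
    (ha1 : ∀ t, C (nseq t) ⊂ C (nseq (t + 1)))
    (ha2 : ∀ t, nseq t ∈ C (nseq (t + 1)))
    (hc : ∀ t, (C (nseq t)).card + 1 = nseq t)
    (A : ℕ → Set Ω)
    (hA : ∀ n, A n = {ω | ∀ l ∈ C n, X l ω < X n ω})
    (B : ℕ → Set Ω)
    (hB : ∀ j, B j = (⋂ t ∈ Finset.range j, (A (nseq t))ᶜ) ∩ A (nseq j))
    (x : ℝ) :
    μ (⋃ j, B j ∩ {ω | X (nseq j) ω < x})
      = ∑' j, μ (B j) * ENNReal.ofReal (F x ^ (nseq j)) :=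
  first_record_value_distribution_general μ X hmeas hindep F hF hF0 hcdf nseq C hsub ha1 ha2 hc A hA
    B hB x
end

section
/- Let X_1, X_2, ... be i.i.d. with continuous cdf F and classical records. For every n ≥ 1 and x ∈ ℝ, P(L(1) = n, X_n < x) = P(L(1) = n) · F(x)^n, where L(1) is the index of the first record after index 1 (i.e., the first n ≥ 2 with X_n > max_{j<n} X_j). -/
/-!
On `{L(1) = n}` the vector `(X 1, …, X n)` has its maximum at `n` and its runner-up at `1`, so on
that event `X n < x` means that all of `X 1, …, X n` are below `x`. Since `F` is continuous, ties
are null, and up to ties the box `{X 1 < x, …, X n < x}` is the disjoint union of the `n (n - 1)`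
events "maximum at `d`, runner-up at `c`" (intersected with the box). By exchangeability of the
i.i.d. vector these events are equally likely, so each has probability `F(x) ^ n / (n (n - 1))`;
taking `x = ∞` gives `P(L(1) = n) = 1 / (n (n - 1))`.
-/

open MeasureTheory ProbabilityTheory Filter Topology
open scoped ENNReal

open Set

lemma MeasureTheory.Measure.ext_of_Iio_s19 (μ ν : Measure ℝ) [IsProbabilityMeasure μ]
    [IsProbabilityMeasure ν] (h : ∀ a, μ (Iio a) = ν (Iio a)) : μ = ν :=
  ext_of_generate_finite _ (borel_eq_generateFrom_Iio ℝ) isPiSystem_Iio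
    (by rintro _ ⟨a, rfl⟩; exact h a) (by simp)

lemma nullSingletonClass_of_continuous_cdf {ν : Measure ℝ} [IsFiniteMeasure ν] {F : ℝ → ℝ}
    (hF : Continuous F) (hν : ∀ x, ν (Iio x) = ENNReal.ofReal (F x)) :
    NullSingletonClass ν := by
  refine ⟨fun r => ?_⟩
  have hle : ∀ t, r < t → ν {r} ≤ ν (Iio t) - ν (Iio r) := fun t hrt => by
    rw [← measure_sdiff (Iio_subset_Iio hrt.le) measurableSet_Iio.nullMeasurableSet
      (measure_ne_top _ _)]
    exact measure_mono (by simpa using hrt)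
  have hlim : Tendsto (fun t => ν (Iio t) - ν (Iio r)) (𝓝[>] r) (𝓝 0) := by
    have hcont := ((ENNReal.continuous_ofReal.comp hF).tendsto r).mono_left
      (nhdsWithin_le_nhds (s := Ioi r))
    simpa [hν] using ENNReal.Tendsto.sub hcont (tendsto_const_nhds (x := ENNReal.ofReal (F r)))
      (Or.inl ENNReal.ofReal_ne_top)
  exact nonpos_iff_eq_zero.1 (ge_of_tendsto hlim (eventually_nhdsWithin_of_forall hle))

lemma ProbabilityTheory.IndepFun.measure_setOf_eq_eq_zero {Ω β : Type*} [MeasurableSpace Ω]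
    [MeasurableSpace β] [MeasurableEq β] {μ : Measure Ω} [IsFiniteMeasure μ] {X Y : Ω → β}
    (hXY : IndepFun X Y μ) (hX : Measurable X) (hY : Measurable Y)
    [NullSingletonClass (μ.map Y)] :
    μ {ω | X ω = Y ω} = 0 := by
  have hdiag : MeasurableSet (diagonal β) := measurableSet_diagonal
  change μ ((fun ω => (X ω, Y ω)) ⁻¹' diagonal β) = 0
  rw [← Measure.map_apply (hX.prodMk hY) hdiag,
    (indepFun_iff_map_prod_eq_prod_map_map hX.aemeasurable hY.aemeasurable).1 hXY,
    Measure.prod_apply hdiag]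
  have hslice : ∀ x : β, Prod.mk x ⁻¹' diagonal β = {x} := fun x => by ext; simp [eq_comm]
  simp [hslice]

lemma map_restrict_eq_pi {Ω κ β : Type*} [MeasurableSpace Ω] [MeasurableSpace β]
    {μ : Measure Ω} [IsProbabilityMeasure μ] {X : κ → Ω → β} (hmeas : ∀ i, Measurable (X i))
    (hindep : iIndepFun X μ) {ν : Measure β} (hlaw : ∀ i, μ.map (X i) = ν) (s : Finset κ) :
    μ.map (fun ω (j : s) => X j ω) = Measure.pi fun _ => ν := by
  rw [(iIndepFun_iff_map_fun_eq_pi_map (f := fun j : s => X j) fun j => (hmeas j).aemeasurable).1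
    (hindep.precomp Subtype.val_injective)]
  simp only [hlaw]

lemma preimage_comp_perm_pi {ι β : Type*} (σ : Equiv.Perm ι) (B : Set β) :
    (fun y : ι → β => y ∘ σ) ⁻¹' univ.pi (fun _ => B) = univ.pi fun _ => B := by
  ext y
  simp only [mem_preimage, mem_univ_pi, Function.comp_apply]
  exact σ.forall_congr_right (q := fun i => y i ∈ B)

section ProductMeasure

variable {ι β : Type*} [Fintype ι] [MeasurableSpace β]

lemma measurePreserving_comp_perm (ν : Measure β) [SigmaFinite ν] (σ : Equiv.Perm ι) :
    MeasurePreserving (fun y : ι → β => y ∘ σ) (Measure.pi fun _ => ν)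
      (Measure.pi fun _ => ν) := by
  convert measurePreserving_piCongrLeft (fun _ : ι => ν) σ.symm using 1
  ext y i
  simp [MeasurableEquiv.coe_piCongrLeft, Equiv.piCongrLeft_apply]

lemma ae_injective_pi [MeasurableEq β] (ν : Measure β) [IsProbabilityMeasure ν]
    [NullSingletonClass ν] :
    ∀ᵐ y ∂(Measure.pi fun _ : ι => ν), y.Injective := by
  have hcoord : ∀ i j : ι, i ≠ j → (Measure.pi fun _ : ι => ν) {y | y i = y j} = 0 := by
    intro i j hij
    have : NullSingletonClass ((Measure.pi fun _ : ι => ν).map (fun y => y j)) := by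
      rw [(measurePreserving_eval _ j).map_eq]; infer_instance
    exact ((iIndepFun_pi (X := fun _ => id) fun _ => aemeasurable_id).indepFun hij)
      |>.measure_setOf_eq_eq_zero (measurable_pi_apply i) (measurable_pi_apply j)
  have hpairs : ∀ᵐ y ∂(Measure.pi fun _ : ι => ν), ∀ i j, i ≠ j → y i ≠ y j :=
    ae_all_iff.2 fun i => ae_all_iff.2 fun j => by
      rw [ae_iff]
      by_cases hij : i = j
      · simp [hij]
      · simpa [hij] using hcoord i j hij
  filter_upwards [hpairs] with y hy i j
  exact not_imp_not.1 (hy i j)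

end ProductMeasure

section TopTwo

variable {ι α : Type*} [LinearOrder α]

def topTwo (c d : ι) : Set (ι → α) :=
  {y | (∀ i, i ≠ d → y i < y d) ∧ ∀ i, i ≠ c → i ≠ d → y i < y c}

def weakTopTwo (c d : ι) : Set (ι → α) :=
  {y | (∀ i, i ≠ c → i ≠ d → y i ≤ y c) ∧ y c < y d}

lemma preimage_comp_perm_topTwo (σ : Equiv.Perm ι) (c d : ι) :
    (fun y : ι → α => y ∘ σ) ⁻¹' topTwo c d = topTwo (σ c) (σ d) := by
  ext y
  exact and_congr (σ.forall_congr fun i => by simp) (σ.forall_congr fun i => by simp)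

lemma disjoint_topTwo {c d c' d' : ι} (h : (c, d) ≠ (c', d')) (hc : c ≠ d) (hc' : c' ≠ d') :
    Disjoint (topTwo c d : Set (ι → α)) (topTwo c' d') := by
  refine disjoint_left.mpr fun y ⟨hd, hc⟩ ⟨hd', hc'⟩ => ?_
  by_cases hdd : d = d'
  · subst hdd
    have hcc : c ≠ c' := fun hcc => h (by rw [hcc])
    exact (hc c' hcc.symm ‹_›).not_gt (hc' c hcc ‹_›)
  · exact (hd d' (Ne.symm hdd)).not_gt (hd' d hdd)

lemma le_of_mem_weakTopTwo {c d : ι} {y : ι → α} (hy : y ∈ weakTopTwo c d) (i : ι) :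
    y i ≤ y d := by
  rcases eq_or_ne i d with rfl | hid
  · rfl
  rcases eq_or_ne i c with rfl | hic
  · exact hy.2.le
  · exact (hy.1 i hic hid).trans hy.2.le

lemma mem_weakTopTwo_iff_mem_topTwo {c d : ι} (hcd : c ≠ d) {y : ι → α} (hy : y.Injective) :
    y ∈ weakTopTwo c d ↔ y ∈ topTwo c d := by
  constructor
  · rintro ⟨hle, hlt⟩
    have hlt' : ∀ i, i ≠ c → i ≠ d → y i < y c := fun i hic hid =>
      (hle i hic hid).lt_of_ne (hy.ne hic)
    refine ⟨fun i hid => ?_, hlt'⟩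
    rcases eq_or_ne i c with rfl | hic
    · exact hlt
    · exact (hlt' i hic hid).trans hlt
  · rintro ⟨hd, hc⟩
    exact ⟨fun i hic hid => (hc i hic hid).le, hd c hcd⟩

lemma exists_mem_topTwo [Fintype ι] {a b : ι} (hab : a ≠ b) {y : ι → α} (hy : y.Injective) :
    ∃ c d, c ≠ d ∧ y ∈ topTwo c d := by
  classical
  obtain ⟨d, -, hd⟩ := Finset.exists_max_image Finset.univ y ⟨a, Finset.mem_univ a⟩
  obtain ⟨c, hc, hcmax⟩ := Finset.exists_max_image (Finset.univ.erase d) y <| by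
    rcases eq_or_ne a d with rfl | had
    · exact ⟨b, Finset.mem_erase.2 ⟨hab.symm, Finset.mem_univ b⟩⟩
    · exact ⟨a, Finset.mem_erase.2 ⟨had, Finset.mem_univ a⟩⟩
  have hcd : c ≠ d := Finset.ne_of_mem_erase hc
  refine ⟨c, d, hcd, fun i hid => ?_, fun i hic hid => ?_⟩
  · exact (hd i (Finset.mem_univ i)).lt_of_ne (hy.ne hid)
  · exact (hcmax i (Finset.mem_erase.2 ⟨hid, Finset.mem_univ i⟩)).lt_of_ne (hy.ne hic)

lemma Equiv.Perm.exists_apply_eq_and_apply_eq [DecidableEq ι] {c d c' d' : ι} (hcd : c ≠ d)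
    (hcd' : c' ≠ d') : ∃ σ : Equiv.Perm ι, σ c = c' ∧ σ d = d' := by
  set τ := Equiv.swap c c'
  have hτ : c' ≠ τ d := by
    rw [← Equiv.swap_apply_left c c']
    exact τ.injective.ne hcd
  refine ⟨Equiv.swap (τ d) d' * τ, ?_, ?_⟩
  · simp only [Equiv.Perm.mul_apply, τ, Equiv.swap_apply_left]
    exact Equiv.swap_apply_of_ne_of_ne hτ hcd'
  · simp only [Equiv.Perm.mul_apply, Equiv.swap_apply_left]

end TopTwo

section TopTwoMeasure

variable {ι : Type*} [Fintype ι] (ν : Measure ℝ)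

local notation "π" => Measure.pi fun _ : ι => ν

lemma measurableSet_topTwo (c d : ι) : MeasurableSet (topTwo c d : Set (ι → ℝ)) := by
  simp only [topTwo]
  measurability

lemma measurableSet_weakTopTwo (c d : ι) : MeasurableSet (weakTopTwo c d : Set (ι → ℝ)) := by
  simp only [weakTopTwo]
  measurability

lemma measure_topTwo_inter_pi_eq [SigmaFinite ν] {a b c d : ι} (hab : a ≠ b) (hcd : c ≠ d)
    {B : Set ℝ} (hB : MeasurableSet B) :
    π (topTwo c d ∩ univ.pi fun _ => B) = π (topTwo a b ∩ univ.pi fun _ => B) := by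
  classical
  obtain ⟨σ, rfl, rfl⟩ := Equiv.Perm.exists_apply_eq_and_apply_eq hab hcd
  have h := (measurePreserving_comp_perm ν σ).measure_preimage
    ((measurableSet_topTwo a b).inter (.univ_pi fun _ => hB)).nullMeasurableSet
  rwa [preimage_inter, preimage_comp_perm_topTwo, preimage_comp_perm_pi] at h

lemma measure_pi_pi_eq_card_offDiag_mul [IsProbabilityMeasure ν] [NullSingletonClass ν]
    [DecidableEq ι] {a b : ι} (hab : a ≠ b) {B : Set ℝ} (hB : MeasurableSet B) :
    ν B ^ Fintype.card ι = ((Finset.univ : Finset ι).offDiag.card : ℝ≥0∞)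
      * π (topTwo a b ∩ univ.pi fun _ => B) := by
  have hcover : (univ.pi fun _ => B : Set (ι → ℝ))
      =ᵐ[π] ⋃ p ∈ (Finset.univ : Finset ι).offDiag,
        topTwo p.1 p.2 ∩ univ.pi fun _ => B := by
    filter_upwards [ae_injective_pi ν] with y hy
    obtain ⟨c, d, hcd, hy⟩ := exists_mem_topTwo hab hy
    refine propext
      ⟨fun hB => mem_iUnion₂.2 ⟨(c, d), by simpa using hcd, hy, hB⟩, fun h => ?_⟩
    obtain ⟨p, -, hp⟩ := mem_iUnion₂.1 h
    exact hp.2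
  have hdisj : (↑(Finset.univ : Finset ι).offDiag : Set (ι × ι)).PairwiseDisjoint
      fun p => topTwo p.1 p.2 ∩ univ.pi fun _ => B := by
    intro p hp q hq hpq
    simp only [Finset.coe_offDiag, mem_offDiag] at hp hq
    exact (disjoint_topTwo hpq hp.2.2 hq.2.2).mono inter_subset_left inter_subset_left
  calc ν B ^ Fintype.card ι = π (univ.pi fun _ => B) := by simp [Measure.pi_pi]
    _ = π (⋃ p ∈ (Finset.univ : Finset ι).offDiag, topTwo p.1 p.2 ∩ univ.pi fun _ => B) :=
      measure_congr hcover
    _ = ∑ p ∈ Finset.univ.offDiag, π (topTwo p.1 p.2 ∩ univ.pi fun _ => B) :=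
      measure_biUnion_finset hdisj fun p _ =>
        (measurableSet_topTwo p.1 p.2).inter (.univ_pi fun _ => hB)
    _ = ∑ _p ∈ Finset.univ.offDiag, π (topTwo a b ∩ univ.pi fun _ => B) :=
      Finset.sum_congr rfl fun p hp =>
        measure_topTwo_inter_pi_eq ν hab (Finset.mem_offDiag.1 hp).2.2 hB
    _ = _ := by rw [Finset.sum_const, nsmul_eq_mul]

lemma measure_weakTopTwo_inter_pi [IsProbabilityMeasure ν] [NullSingletonClass ν] {a b : ι}
    (hab : a ≠ b) {B : Set ℝ} (hB : MeasurableSet B) :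
    π (weakTopTwo a b ∩ univ.pi fun _ => B) = π (weakTopTwo a b) * ν B ^ Fintype.card ι := by
  classical
  have hae (S : Set (ι → ℝ)) : π (weakTopTwo a b ∩ S) = π (topTwo a b ∩ S) := by
    refine measure_congr ?_
    filter_upwards [ae_injective_pi ν] with y hy
    exact propext (and_congr_left' (mem_weakTopTwo_iff_mem_topTwo hab hy))
  have hK : ((Finset.univ : Finset ι).offDiag.card : ℝ≥0∞) ≠ 0 := by
    exact_mod_cast Finset.card_ne_zero.2 ⟨(a, b), by simpa using hab⟩
  have huniv := measure_pi_pi_eq_card_offDiag_mul ν hab MeasurableSet.univ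
  rw [measure_univ, one_pow, pi_univ, inter_univ] at huniv
  rw [hae, ← inter_univ (weakTopTwo a b), hae, inter_univ,
    ← ENNReal.mul_right_inj hK (ENNReal.natCast_ne_top _),
    ← measure_pi_pi_eq_card_offDiag_mul ν hab hB, ← mul_assoc, ← huniv, one_mul]

end TopTwoMeasure

def IsRecord {α : Type*} [LT α] (s : ℕ → α) (n : ℕ) : Prop :=
  ∀ j, 1 ≤ j → j < n → s j < s n

lemma firstRecord_iff {α : Type*} [LinearOrder α] (s : ℕ → α) {n : ℕ} (hn : 2 ≤ n) :
    (IsRecord s n ∧ ∀ u ∈ Finset.Ico 2 n, ¬ IsRecord s u)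
      ↔ (∀ u, 2 ≤ u → u < n → s u ≤ s 1) ∧ s 1 < s n := by
  constructor
  · rintro ⟨hrec, hnot⟩
    refine ⟨fun u => ?_, hrec 1 le_rfl (by omega)⟩
    induction u using Nat.strong_induction_on with
    | _ u ih =>
      intro h2u hun
      have := hnot u (Finset.mem_Ico.2 ⟨h2u, hun⟩)
      simp only [IsRecord, not_forall, not_lt] at this
      obtain ⟨j, hj1, hju, hle⟩ := this
      rcases hj1.eq_or_lt with rfl | hj1
      · exact hle
      · exact hle.trans (ih j hju hj1 (by omega))
  · rintro ⟨hle, hlt⟩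
    refine ⟨fun j hj1 hjn => ?_, fun u hu hrec => ?_⟩
    · rcases hj1.eq_or_lt with rfl | hj1
      · exact hlt
      · exact (hle j hj1 hjn).trans_lt hlt
    · obtain ⟨h2u, hun⟩ := Finset.mem_Ico.1 hu
      exact (hle u h2u hun).not_gt (hrec 1 le_rfl (by omega))

lemma restrict_mem_weakTopTwo_iff {α : Type*} [LinearOrder α] (s : ℕ → α) {n : ℕ}
    (h1 : 1 ∈ Finset.Icc 1 n) (hn : n ∈ Finset.Icc 1 n) :
    (fun j : Finset.Icc 1 n => s j) ∈ weakTopTwo ⟨1, h1⟩ ⟨n, hn⟩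
      ↔ (∀ u, 2 ≤ u → u < n → s u ≤ s 1) ∧ s 1 < s n := by
  simp only [weakTopTwo, mem_ofPred_eq, ne_eq, Subtype.forall, Subtype.mk.injEq, Finset.mem_Icc]
  refine and_congr_left' ⟨fun h u h2u hun => h u ⟨by omega, by omega⟩ (by omega) (by omega),
    fun h u hu hu1 hun => h u (by omega) (by omega)⟩

lemma weakTopTwo_inter_pi_Iio {ι : Type*} (c d : ι) (x : ℝ) :
    weakTopTwo c d ∩ univ.pi (fun _ => Iio x) = weakTopTwo c d ∩ {y | y d < x} := by
  ext y
  simp only [mem_inter_iff, mem_univ_pi, mem_Iio, mem_ofPred_eq]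
  exact and_congr_right fun hy =>
    ⟨fun h => h d, fun h i => (le_of_mem_weakTopTwo hy i).trans_lt h⟩

/-- First-record factorization for classical records: with
`A n = {X n > max_{1 ≤ j < n} X j}` and `{L(1) = n} = A n ∩ ⋂_{2 ≤ u < n} (A u)ᶜ`
the event that the first record after index 1 occurs at index `n ≥ 2`, one has
`P(L(1) = n, X n < x) = P(L(1) = n) · F(x) ^ n` for every `x`. -/
theorem first_record_time_value_factorization
    {Ω : Type*} [MeasurableSpace Ω] (μ : Measure Ω) [IsProbabilityMeasure μ]
    (X : ℕ → Ω → ℝ) (hmeas : ∀ i, Measurable (X i))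
    (hindep : iIndepFun X μ)
    (F : ℝ → ℝ) (hF : Continuous F) (hF0 : ∀ x, 0 ≤ F x)
    (hcdf : ∀ i x, μ {ω | X i ω < x} = ENNReal.ofReal (F x))
    (A : ℕ → Set Ω)
    (hA : ∀ n, A n = {ω | ∀ j, 1 ≤ j → j < n → X j ω < X n ω})
    (n : ℕ) (hn : 2 ≤ n) (x : ℝ) :
    μ ((A n ∩ ⋂ u ∈ Finset.Ico 2 n, (A u)ᶜ) ∩ {ω | X n ω < x})
      = μ (A n ∩ ⋂ u ∈ Finset.Ico 2 n, (A u)ᶜ) * ENNReal.ofReal (F x ^ n) := by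
  have hlaw_Iio (i : ℕ) (t : ℝ) : μ.map (X i) (Iio t) = ENNReal.ofReal (F t) := by
    rw [Measure.map_apply (hmeas i) measurableSet_Iio]
    exact hcdf i t
  have hprob (i : ℕ) : IsProbabilityMeasure (μ.map (X i)) :=
    Measure.isProbabilityMeasure_map (hmeas i).aemeasurable
  have hlaw (i : ℕ) : μ.map (X i) = μ.map (X 1) :=
    Measure.ext_of_Iio_s19 _ _ fun t => by rw [hlaw_Iio, hlaw_Iio]
  have := nullSingletonClass_of_continuous_cdf hF (hlaw_Iio 1)
  have h1 : 1 ∈ Finset.Icc 1 n := Finset.mem_Icc.2 ⟨le_rfl, by omega⟩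
  have hn' : n ∈ Finset.Icc 1 n := Finset.mem_Icc.2 ⟨by omega, le_rfl⟩
  have hab : (⟨1, h1⟩ : Finset.Icc 1 n) ≠ ⟨n, hn'⟩ := by
    simp only [ne_eq, Subtype.mk.injEq]; omega
  set Φ : Ω → Finset.Icc 1 n → ℝ := fun ω j => X j ω
  have hΦ : Measurable Φ := measurable_pi_lambda _ fun j => hmeas j
  have hE : A n ∩ ⋂ u ∈ Finset.Ico 2 n, (A u)ᶜ
      = Φ ⁻¹' weakTopTwo ⟨1, h1⟩ ⟨n, hn'⟩ := by
    ext ω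
    simp only [hA, mem_inter_iff, mem_iInter₂, mem_compl_iff, mem_preimage]
    exact (firstRecord_iff (X · ω) hn).trans (restrict_mem_weakTopTwo_iff (X · ω) h1 hn').symm
  have hEx : Φ ⁻¹' weakTopTwo ⟨1, h1⟩ ⟨n, hn'⟩ ∩ {ω | X n ω < x}
      = Φ ⁻¹' (weakTopTwo ⟨1, h1⟩ ⟨n, hn'⟩ ∩ univ.pi fun _ => Iio x) := by
    rw [weakTopTwo_inter_pi_Iio]; rfl
  have hmeasE := measurableSet_weakTopTwo (⟨1, h1⟩ : Finset.Icc 1 n) ⟨n, hn'⟩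
  rw [hE, hEx, ← Measure.map_apply hΦ (hmeasE.inter (.univ_pi fun _ => measurableSet_Iio)),
    ← Measure.map_apply hΦ hmeasE, map_restrict_eq_pi hmeas hindep hlaw,
    measure_weakTopTwo_inter_pi _ hab measurableSet_Iio, hlaw_Iio, Fintype.card_coe, Nat.card_Icc,
    Nat.add_sub_cancel, ENNReal.ofReal_pow (hF0 x)]
end
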